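/- Suppose for each n ∈ ℕ we have Q_n minimizing within 1/n: I(Q_n) + F_{S_n}(Q_n) < inf_{P ∈ C} (I(P) + F_{S_n}(P)) + 1/n, where C is a closed subset of a compact metrizable space on which I is lower semicontinuous with compact sublevel sets, each F_S is continuous, F_S is nondecreasing in S, S_n → ∞, and F = sup_S F_S pointwise (monotone limit). Then liminf_{S→∞} inf_{P ∈ C} (I(P) + F_S(P)) ≥ inf_{P ∈ C} (I(P) + F(P)). -/

import Mathlib

/-!
Every `FS S` is dominated by `FS (Sn n)` once `Sn n ≥ S`, so the almost minimizers `Q n`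
satisfy `I (Q n) + FS S (Q n) ≤ L + 1/n` eventually, where `L = ⨆ S, ⨅ P ∈ C, I P + FS S P`
is the limit of the monotone infima. A cluster point `x ∈ C` of `Q` inherits `I x + FS S x ≤ L`
by lower semicontinuity; taking the supremum over `S` gives `I x + F x ≤ L`.
-/

open Filter ENNReal
open scoped NNReal

theorem LowerSemicontinuous.le_of_mapClusterPt {X ι γ : Type*} [TopologicalSpace X]
    [LinearOrder γ] [TopologicalSpace γ] [ClosedIicTopology γ] {f : X → γ}
    (hf : LowerSemicontinuous f) {l : Filter ι} {u : ι → X} {x : X} (hx : MapClusterPt x l u)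
    {c : γ} (h : ∀ᶠ i in l, f (u i) ≤ c) : f x ≤ c :=
  (hf.isClosed_preimage c).mem_of_mapClusterPt hx h

theorem LowerSemicontinuous.le_of_mapClusterPt_of_eventually_le_add
    {X ι : Type*} [TopologicalSpace X] {f : X → ℝ≥0∞} (hf : LowerSemicontinuous f)
    {l : Filter ι} {u : ι → X} {x : X} (hx : MapClusterPt x l u) {c : ℝ≥0∞}
    (h : ∀ ε : ℝ≥0, 0 < ε → ∀ᶠ i in l, f (u i) ≤ c + ε) : f x ≤ c :=
  ENNReal.le_of_forall_pos_le_add fun ε hε _ => hf.le_of_mapClusterPt hx (h ε hε)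

section AlmostMinimizers

variable {X : Type*} {C : Set X} {I : X → ℝ≥0∞} {FS : ℝ → X → ℝ≥0∞}

theorem monotone_biInf_add (hmono : ∀ x, Monotone (fun S => FS S x)) :
    Monotone fun S => ⨅ P ∈ C, I P + FS S P :=
  fun _ _ hST => iInf₂_mono fun P _ => add_le_add_right (hmono P hST) _

theorem eventually_add_le_iSup_biInf_add_add (hmono : ∀ x, Monotone (fun S => FS S x))
    {Sn : ℕ → ℝ} (hSn : Tendsto Sn atTop atTop) {Q : ℕ → X}
    (hQmin : ∀ n : ℕ, I (Q n) + FS (Sn n) (Q n) < (⨅ P ∈ C, I P + FS (Sn n) P) + 1 / n)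
    (S : ℝ) {ε : ℝ≥0} (hε : 0 < ε) :
    ∀ᶠ n in atTop, I (Q n) + FS S (Q n) ≤ (⨆ T : ℝ, ⨅ P ∈ C, I P + FS T P) + ε := by
  have hinv : ∀ᶠ n : ℕ in atTop, (n : ℝ≥0∞)⁻¹ ≤ ε :=
    ENNReal.tendsto_inv_nat_nhds_zero.eventually_le_const (by exact_mod_cast hε)
  filter_upwards [hSn.eventually_ge_atTop S, hinv] with n hSSn hn
  calc I (Q n) + FS S (Q n)
      ≤ I (Q n) + FS (Sn n) (Q n) := add_le_add_right (hmono _ hSSn) _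
    _ ≤ (⨅ P ∈ C, I P + FS (Sn n) P) + 1 / n := (hQmin n).le
    _ ≤ (⨆ T : ℝ, ⨅ P ∈ C, I P + FS T P) + ε :=
      add_le_add (le_iSup (fun T => ⨅ P ∈ C, I P + FS T P) _) (by rwa [one_div])

end AlmostMinimizers

theorem stmt_16_general {X : Type*} [TopologicalSpace X] [CompactSpace X]
    (C : Set X) (hC : IsClosed C)
    (I : X → ℝ≥0∞) (hI : LowerSemicontinuous I)
    (FS : ℝ → X → ℝ≥0∞) (hFScont : ∀ S, Continuous (FS S))
    (hmono : ∀ x, Monotone (fun S => FS S x))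
    (F : X → ℝ≥0∞) (hF : ∀ x, F x = ⨆ S : ℝ, FS S x)
    (Sn : ℕ → ℝ) (hSn : Tendsto Sn atTop atTop)
    (Q : ℕ → X) (hQ : ∀ n, Q n ∈ C)
    (hQmin : ∀ n : ℕ, I (Q n) + FS (Sn n) (Q n)
      < (⨅ P ∈ C, I P + FS (Sn n) P) + 1 / n) :
    (⨅ P ∈ C, I P + F P) ≤ liminf (fun S : ℝ => ⨅ P ∈ C, I P + FS S P) atTop := by
  obtain ⟨x, hxC, hx⟩ :=
    hC.isCompact.exists_mapClusterPt (f := atTop) (tendsto_principal.2 (Eventually.of_forall hQ))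
  have hx_le : I x + F x ≤ ⨆ S : ℝ, ⨅ P ∈ C, I P + FS S P := by
    rw [hF, ENNReal.add_iSup]
    refine iSup_le fun S => ?_
    exact (hI.add (hFScont S).lowerSemicontinuous).le_of_mapClusterPt_of_eventually_le_add hx
      fun ε hε => eventually_add_le_iSup_biInf_add_add hmono hSn hQmin S hε
  calc (⨅ P ∈ C, I P + F P) ≤ I x + F x := biInf_le _ hxC
    _ ≤ ⨆ S : ℝ, ⨅ P ∈ C, I P + FS S P := hx_le
    _ = liminf (fun S : ℝ => ⨅ P ∈ C, I P + FS S P) atTop :=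
      (tendsto_atTop_iSup (monotone_biInf_add hmono)).liminf_eq.symm

theorem stmt_16 {X : Type*} [TopologicalSpace X] [CompactSpace X]
    [TopologicalSpace.MetrizableSpace X]
    (C : Set X) (hC : IsClosed C) (hCne : C.Nonempty)
    (I : X → ℝ≥0∞) (hI : LowerSemicontinuous I)
    (FS : ℝ → X → ℝ≥0∞) (hFScont : ∀ S, Continuous (FS S))
    (hmono : ∀ x, Monotone (fun S => FS S x))
    (F : X → ℝ≥0∞) (hF : ∀ x, F x = ⨆ S : ℝ, FS S x)
    (Sn : ℕ → ℝ) (hSn : Tendsto Sn atTop atTop)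
    (Q : ℕ → X) (hQ : ∀ n, Q n ∈ C)
    (hQmin : ∀ n : ℕ, I (Q n) + FS (Sn n) (Q n)
      < (⨅ P ∈ C, I P + FS (Sn n) P) + 1 / n) :
    (⨅ P ∈ C, I P + F P) ≤ liminf (fun S : ℝ => ⨅ P ∈ C, I P + FS S P) atTop :=
  stmt_16_general C hC I hI FS hFScont hmono F hF Sn hSn Q hQ hQmin
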